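/- Suppose for every z ∈ Z the loss F(·, z) is convex, L-Lipschitz, and β-smooth, and run SGD with constant step size 0 < α ≤ 2/β for T steps on the neighbouring datasets S and S'. Then the expected averaged parameter distance over the last k iterates satisfies E_I[δ̄_T] ≤ (2αL/n)(T − k/2), where δ̄_T(I) = (1/k) Σ_{i=T−k+1}^T ‖w_i(I) − w_i'(I)‖. -/

import Mathlib

open RealInnerProductSpace

/-- Derivative along a line. -/
lemma line_hasDerivAt {E : Type*} [NormedAddCommGroup E] [InnerProductSpace ℝ E]
    (f : E → ℝ) (g : E → E)
    (hdiff : ∀ x, HasFDerivAt f ((innerSL ℝ) (g x)) x)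
    (x d : E) (t : ℝ) :
    HasDerivAt (fun s : ℝ => f (x + s • d)) ⟪g (x + t • d), d⟫ t := by
  have hline : HasDerivAt (fun s : ℝ => x + s • d) d t := by
    simpa using ((hasDerivAt_id t).smul_const d).const_add x
  simpa [Function.comp_def] using (hdiff (x + t • d)).comp_hasDerivAt t hline

/-- Descent lemma for β-smooth functions. -/
lemma descent_lemma {E : Type*} [NormedAddCommGroup E] [InnerProductSpace ℝ E]
    (f : E → ℝ) (g : E → E) (β : ℝ) (hβ : 0 < β)
    (hdiff : ∀ x, HasFDerivAt f ((innerSL ℝ) (g x)) x)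
    (hsmooth : ∀ u v, ‖g u - g v‖ ≤ β * ‖u - v‖)
    (x y : E) :
    f y ≤ f x + ⟪g x, y - x⟫ + β / 2 * ‖y - x‖ ^ 2 := by
  set d := y - x with hd
  set ψ : ℝ → ℝ := fun t => f (x + t • d) - t * ⟪g x, d⟫ - β / 2 * ‖d‖ ^ 2 * t ^ 2 with hψ
  have hψ' : ∀ t : ℝ, HasDerivAt ψ (⟪g (x + t • d), d⟫ - ⟪g x, d⟫ - β * ‖d‖ ^ 2 * t) t := by
    intro t
    have h1 := line_hasDerivAt f g hdiff x d t
    have h2 : HasDerivAt (fun s : ℝ => s * ⟪g x, d⟫) ⟪g x, d⟫ t := by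
      simpa using (hasDerivAt_id t).mul_const ⟪g x, d⟫
    have h3 : HasDerivAt (fun s : ℝ => β / 2 * ‖d‖ ^ 2 * s ^ 2) (β * ‖d‖ ^ 2 * t) t := by
      have := (hasDerivAt_pow 2 t).const_mul (β / 2 * ‖d‖ ^ 2)
      exact this.congr_deriv (by norm_num; ring)
    exact (h1.sub h2).sub h3
  have hanti : AntitoneOn ψ (Set.Icc 0 1) := by
    apply antitoneOn_of_deriv_nonpos (convex_Icc 0 1)
    · exact fun t _ => (hψ' t).continuousAt.continuousWithinAt
    · exact fun t _ => (hψ' t).differentiableAt.differentiableWithinAt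
    · intro t ht
      rw [interior_Icc] at ht
      rw [(hψ' t).deriv]
      have hb : ⟪g (x + t • d) - g x, d⟫ ≤ β * ‖d‖ ^ 2 * t := by
        calc ⟪g (x + t • d) - g x, d⟫ ≤ ‖g (x + t • d) - g x‖ * ‖d‖ :=
              real_inner_le_norm _ _
          _ ≤ β * ‖(x + t • d) - x‖ * ‖d‖ := by
              have := hsmooth (x + t • d) x
              nlinarith [norm_nonneg d]
          _ = β * ‖d‖ ^ 2 * t := by
              simp [norm_smul, abs_of_pos ht.1]
              ring
      have : ⟪g (x + t • d) - g x, d⟫ = ⟪g (x + t • d), d⟫ - ⟪g x, d⟫ := by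
        rw [inner_sub_left]
      linarith
  have h01 : ψ 1 ≤ ψ 0 := hanti (Set.mem_Icc.2 ⟨le_refl 0, zero_le_one⟩)
    (Set.mem_Icc.2 ⟨zero_le_one, le_refl 1⟩) zero_le_one
  simp only [hψ, one_smul, zero_smul, add_zero, one_pow, one_mul, zero_pow, mul_zero,
    sub_zero, zero_mul] at h01
  have hxy : x + d = y := by rw [hd]; abel
  rw [hxy] at h01
  linarith

/-- First-order condition for convex differentiable functions. -/
lemma first_order {E : Type*} [NormedAddCommGroup E] [InnerProductSpace ℝ E]
    (f : E → ℝ) (g : E → E)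
    (hdiff : ∀ x, HasFDerivAt f ((innerSL ℝ) (g x)) x)
    (hconv : ConvexOn ℝ Set.univ f)
    (x y : E) :
    f x + ⟪g x, y - x⟫ ≤ f y := by
  set d := y - x with hd
  set φ : ℝ → ℝ := fun t => f (x + t • d) with hφ
  have hφconv : ConvexOn ℝ Set.univ φ := by
    have amap : ℝ →ᵃ[ℝ] E :=
      { toFun := fun t => x + t • d
        linear := LinearMap.toSpanSingleton ℝ E d
        map_vadd' := by
          intro p v
          simp [LinearMap.toSpanSingleton_apply, add_smul]
          abel }
    have := hconv.comp_affineMap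
      ({ toFun := fun t => x + t • d
         linear := LinearMap.toSpanSingleton ℝ E d
         map_vadd' := by
           intro p v
           simp [LinearMap.toSpanSingleton_apply, add_smul]
           abel } : ℝ →ᵃ[ℝ] E)
    simpa [Function.comp_def] using this
  have hder : HasDerivAt φ ⟪g x, d⟫ 0 := by
    have := line_hasDerivAt f g hdiff x d 0
    simpa using this
  have := hφconv.le_slope_of_hasDerivAt (Set.mem_univ (0:ℝ)) (Set.mem_univ (1:ℝ))
    zero_lt_one hder
  rw [slope_def_field] at this
  have h0 : φ 0 = f x := by simp [hφ]
  have h1 : φ 1 = f y := by simp [hφ, hd]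
  simp [h0, h1] at this
  linarith [this]

/-- Co-coercivity of the gradient of a convex smooth function. -/
lemma cocoercive {E : Type*} [NormedAddCommGroup E] [InnerProductSpace ℝ E]
    (f : E → ℝ) (g : E → E) (β : ℝ) (hβ : 0 < β)
    (hdiff : ∀ x, HasFDerivAt f ((innerSL ℝ) (g x)) x)
    (hconv : ConvexOn ℝ Set.univ f)
    (hsmooth : ∀ u v, ‖g u - g v‖ ≤ β * ‖u - v‖)
    (u v : E) :
    (1 / β) * ‖g u - g v‖ ^ 2 ≤ ⟪g u - g v, u - v⟫ := by
  -- key half-inequality, proved for any pair (u, v)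
  have key : ∀ a b : E,
      f a - ⟪g a, a⟫ ≤ f b - ⟪g a, b⟫ - 1 / (2 * β) * ‖g b - g a‖ ^ 2 := by
    intro a b
    set h : E → ℝ := fun w => f w - ⟪g a, w⟫ with hh
    have hgh : ∀ x : E, HasFDerivAt h ((innerSL ℝ) (g x - g a)) x := by
      intro x
      have h1 := (hdiff x).sub ((innerSL ℝ (g a)).hasFDerivAt (x := x))
      have : (innerSL ℝ) (g x - g a) = innerSL ℝ (g x) - innerSL ℝ (g a) :=
        map_sub (innerSL ℝ) _ _
      rw [this]
      exact h1
    have hhconv : ConvexOn ℝ Set.univ h := by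
      have hlin : ConcaveOn ℝ Set.univ (fun w : E => ⟪g a, w⟫) := by
        refine ⟨convex_univ, ?_⟩
        intro x _ y _ p q hp hq hpq
        simp [inner_add_right, real_inner_smul_right]
      exact hconv.sub hlin
    have hhsmooth : ∀ x y : E, ‖(g x - g a) - (g y - g a)‖ ≤ β * ‖x - y‖ := by
      intro x y; simpa using hsmooth x y
    -- h is minimized at a (its gradient there is 0)
    have hmin : ∀ y : E, h a ≤ h y := by
      intro y
      have := first_order h (fun x => g x - g a) hgh hhconv a y
      simpa using this
    -- descent step from b
    have hdesc := descent_lemma h (fun x => g x - g a) β hβ hgh hhsmooth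
      b (b - (1 / β) • (g b - g a))
    have hstep : h (b - (1 / β) • (g b - g a)) ≤ h b - 1 / (2 * β) * ‖g b - g a‖ ^ 2 := by
      have e1 : (b - (1 / β) • (g b - g a)) - b = -((1 / β) • (g b - g a)) := by abel
      rw [e1] at hdesc
      have e2 : ⟪g b - g a, -((1 / β) • (g b - g a))⟫ = -(1 / β) * ‖g b - g a‖ ^ 2 := by
        rw [inner_neg_right, real_inner_smul_right, real_inner_self_eq_norm_sq]
        ring
      have e3 : ‖-((1 / β) • (g b - g a))‖ ^ 2 = (1 / β) ^ 2 * ‖g b - g a‖ ^ 2 := by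
        rw [norm_neg, norm_smul, Real.norm_eq_abs, abs_of_pos (by positivity : (0:ℝ) < 1 / β)]
        ring
      rw [e2, e3] at hdesc
      calc h (b - (1 / β) • (g b - g a))
          ≤ h b + -(1 / β) * ‖g b - g a‖ ^ 2 + β / 2 * ((1 / β) ^ 2 * ‖g b - g a‖ ^ 2) :=
            hdesc
        _ = h b - 1 / (2 * β) * ‖g b - g a‖ ^ 2 := by field_simp; ring
    have := le_trans (hmin (b - (1 / β) • (g b - g a))) hstep
    simpa [hh] using this
  have h1 := key u v
  have h2 := key v u
  have e1 : ‖g u - g v‖ = ‖g v - g u‖ := by rw [← norm_neg]; congr 1; abel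
  have einner : ⟪g u - g v, u - v⟫ = (⟪g u, u⟫ - ⟪g u, v⟫) + (⟪g v, v⟫ - ⟪g v, u⟫) := by
    rw [inner_sub_left, inner_sub_right, inner_sub_right]
    ring
  have hsq : ‖g u - g v‖ ^ 2 = ‖g v - g u‖ ^ 2 := by rw [e1]
  have hsum : 1 / (2 * β) * ‖g v - g u‖ ^ 2 + 1 / (2 * β) * ‖g u - g v‖ ^ 2
      = (1 / β) * ‖g u - g v‖ ^ 2 := by
    rw [hsq]; field_simp; ring
  linarith [h1, h2, einner.le, einner.ge, hsum]

/-- Non-expansiveness of the gradient step. -/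
lemma grad_step_nonexpansive {E : Type*} [NormedAddCommGroup E] [InnerProductSpace ℝ E]
    (f : E → ℝ) (g : E → E) (β α : ℝ) (hβ : 0 < β) (hα : 0 < α) (hα2 : α ≤ 2 / β)
    (hdiff : ∀ x, HasFDerivAt f ((innerSL ℝ) (g x)) x)
    (hconv : ConvexOn ℝ Set.univ f)
    (hsmooth : ∀ u v, ‖g u - g v‖ ≤ β * ‖u - v‖)
    (u v : E) :
    ‖(u - α • g u) - (v - α • g v)‖ ≤ ‖u - v‖ := by
  have hcoco := cocoercive f g β hβ hdiff hconv hsmooth u v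
  have e0 : (u - α • g u) - (v - α • g v) = (u - v) - α • (g u - g v) := by
    rw [smul_sub]; abel
  rw [e0]
  have hsq : ‖(u - v) - α • (g u - g v)‖ ^ 2 ≤ ‖u - v‖ ^ 2 := by
    rw [norm_sub_sq_real, real_inner_smul_right, norm_smul, Real.norm_eq_abs,
      abs_of_pos hα]
    have h1 : α ^ 2 * ‖g u - g v‖ ^ 2 ≤ (2 * α / β) * ‖g u - g v‖ ^ 2 := by
      have hαβ : α * β ≤ 2 := (le_div_iff₀ hβ).mp hα2
      have : α ^ 2 ≤ 2 * α / β := by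
        rw [le_div_iff₀ hβ]
        nlinarith
      nlinarith [sq_nonneg ‖g u - g v‖]
    have h2 : (2 * α / β) * ‖g u - g v‖ ^ 2 ≤ 2 * α * ⟪g u - g v, u - v⟫ := by
      have := mul_le_mul_of_nonneg_left hcoco (by positivity : (0:ℝ) ≤ 2 * α)
      calc (2 * α / β) * ‖g u - g v‖ ^ 2 = 2 * α * ((1 / β) * ‖g u - g v‖ ^ 2) := by ring
        _ ≤ 2 * α * ⟪g u - g v, u - v⟫ := this
    rw [mul_pow]
    rw [real_inner_comm (g u - g v) (u - v)]
    linarith [h1, h2]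
  nlinarith [norm_nonneg ((u - v) - α • (g u - g v)), norm_nonneg (u - v)]

/-- Gradient norm bound for Lipschitz function. -/
lemma grad_norm_le {E : Type*} [NormedAddCommGroup E] [InnerProductSpace ℝ E]
    (f : E → ℝ) (g : E → E) (L : ℝ) (hL : 0 < L)
    (hdiff : ∀ x, HasFDerivAt f ((innerSL ℝ) (g x)) x)
    (hLip : ∀ u v, |f u - f v| ≤ L * ‖u - v‖) (x : E) :
    ‖g x‖ ≤ L := by
  have hlip : LipschitzWith (Real.toNNReal L) f := by
    apply LipschitzWith.of_dist_le_mul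
    intro u v
    rw [Real.dist_eq, dist_eq_norm, Real.coe_toNNReal L hL.le]
    exact hLip u v
  have h1 : ‖fderiv ℝ f x‖ ≤ (Real.toNNReal L : ℝ) := norm_fderiv_le_of_lipschitz ℝ hlip
  rw [(hdiff x).fderiv, innerSL_apply_norm] at h1
  rwa [Real.coe_toNNReal L hL.le] at h1

lemma sum_range_id_real (k : ℕ) : ∑ i ∈ Finset.range k, (i : ℝ) = k * (k - 1) / 2 := by
  induction k with
  | zero => simp
  | succ m ih =>
    rw [Finset.sum_range_succ, ih]
    push_cast
    ring

lemma count_sum (n m : ℕ) (t0 : Fin (m + 1)) (j : Fin n) (c : ℝ) :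
    ∑ I : Fin (m + 1) → Fin n, (if I t0 = j then c else 0) = c * (n : ℝ) ^ m := by
  have hcard : Fintype.card ({ i : Fin (m + 1) // i ≠ t0 } → Fin n) = n ^ m := by
    rw [Fintype.card_fun, Fintype.card_fin]
    congr 1
    rw [Fintype.card_subtype_compl, Fintype.card_subtype_eq, Fintype.card_fin]
    omega
  calc ∑ I : Fin (m + 1) → Fin n, (if I t0 = j then c else 0)
      = ∑ p : Fin n × ({ i : Fin (m + 1) // i ≠ t0 } → Fin n), (if p.1 = j then c else 0) :=
        Fintype.sum_equiv (Equiv.funSplitAt t0 (Fin n)) _ _ (fun I => rfl)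
    _ = ∑ x : Fin n, ∑ _r : ({ i : Fin (m + 1) // i ≠ t0 } → Fin n), (if x = j then c else 0) :=
        Fintype.sum_prod_type _
    _ = ∑ x : Fin n, (n : ℝ) ^ m * (if x = j then c else 0) := by
        refine Finset.sum_congr rfl fun x _ => ?_
        rw [Finset.sum_const, Finset.card_univ, hcard, nsmul_eq_mul]
        push_cast
        ring
    _ = (n : ℝ) ^ m * ∑ x : Fin n, (if x = j then c else 0) := by rw [Finset.mul_sum]
    _ = c * (n : ℝ) ^ m := by
        rw [Finset.sum_ite_eq' Finset.univ j (fun _ => c)]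
        simp [mul_comm]

/-- **Parameter-stability bound inside the proof of Theorem 4.2 (convex case).** For SGD with
constant step size `0 < α ≤ 2/β` run for `T` steps on neighbouring datasets, the expected
averaged parameter distance over the last `k` iterates satisfies
`E_I[δ̄_T] ≤ (2αL/n)(T - k/2)`. -/
theorem sewa_convex_parameter_stability
    {E : Type*} [NormedAddCommGroup E] [InnerProductSpace ℝ E]
    {Z : Type*} (F : E → Z → ℝ) (gradF : E → Z → E)
    (L β : ℝ) (hL : 0 < L) (hβ : 0 < β)
    (hdiff : ∀ (z : Z) (x : E), HasFDerivAt (fun u => F u z) ((innerSL ℝ) (gradF x z)) x)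
    (hconv : ∀ z : Z, ConvexOn ℝ Set.univ (fun u => F u z))
    (hLip : ∀ (z : Z) (u v : E), |F u z - F v z| ≤ L * ‖u - v‖)
    (hsmooth : ∀ (z : Z) (u v : E), ‖gradF u z - gradF v z‖ ≤ β * ‖u - v‖)
    (n : ℕ) (hn : 2 ≤ n) (S S' : Fin n → Z) (j : Fin n)
    (hSS' : ∀ i, i ≠ j → S i = S' i)
    (T k : ℕ) (hk : 1 ≤ k) (hkT : k ≤ T)
    (α : ℝ) (hα : 0 < α) (hα2 : α ≤ 2 / β)
    (w0 : E) (w w' : (Fin (T + 1) → Fin n) → ℕ → E)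
    (hw1 : ∀ I, w I 1 = w0) (hw1' : ∀ I, w' I 1 = w0)
    (hwrec : ∀ I, ∀ t, ∀ (h2 : 2 ≤ t) (hT' : t ≤ T),
      w I t = w I (t - 1) - α • gradF (w I (t - 1)) (S (I ⟨t, by omega⟩)))
    (hwrec' : ∀ I, ∀ t, ∀ (h2 : 2 ≤ t) (hT' : t ≤ T),
      w' I t = w' I (t - 1) - α • gradF (w' I (t - 1)) (S' (I ⟨t, by omega⟩))) :
    ((1 : ℝ) / (n : ℝ) ^ (T + 1)) *
      ∑ I : Fin (T + 1) → Fin n,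
        ((1 : ℝ) / k) * ∑ i : Fin k, ‖w I (T - k + 1 + i) - w' I (T - k + 1 + i)‖
      ≤ (2 * α * L / n) * ((T : ℝ) - (k : ℝ) / 2) := by
  have hn0 : (0 : ℝ) < n := by positivity
  have hk0 : (0 : ℝ) < k := by exact_mod_cast hk
  have hN : (0 : ℝ) < (n : ℝ) ^ T := by positivity
  -- gradient norm bound
  have hgnorm : ∀ (z : Z) (x : E), ‖gradF x z‖ ≤ L := fun z x =>
    grad_norm_le (fun u => F u z) (fun x => gradF x z) L hL (hdiff z) (hLip z) x
  -- non-expansiveness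
  have hnonexp : ∀ (z : Z) (u v : E),
      ‖(u - α • gradF u z) - (v - α • gradF v z)‖ ≤ ‖u - v‖ := fun z u v =>
    grad_step_nonexpansive (fun u => F u z) (fun x => gradF x z) β α hβ hα hα2
      (hdiff z) (hconv z) (hsmooth z) u v
  -- per-step bound
  have step : ∀ (I : Fin (T + 1) → Fin n) (t : ℕ) (h2 : 2 ≤ t) (hT' : t ≤ T),
      ‖w I t - w' I t‖ ≤ ‖w I (t - 1) - w' I (t - 1)‖ +
        (if I ⟨t, by omega⟩ = j then 2 * α * L else 0) := by
    intro I t h2 hT'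
    rw [hwrec I t h2 hT', hwrec' I t h2 hT']
    by_cases h : I ⟨t, by omega⟩ = j
    · rw [if_pos h]
      set u := w I (t - 1)
      set v := w' I (t - 1)
      set g1 := gradF u (S (I ⟨t, by omega⟩))
      set g2 := gradF v (S' (I ⟨t, by omega⟩))
      have e : (u - α • g1) - (v - α • g2) = (u - v) - (α • g1 - α • g2) := by abel
      rw [e]
      calc ‖(u - v) - (α • g1 - α • g2)‖ ≤ ‖u - v‖ + ‖α • g1 - α • g2‖ := norm_sub_le _ _
        _ ≤ ‖u - v‖ + (‖α • g1‖ + ‖α • g2‖) := by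
            linarith [norm_sub_le (α • g1) (α • g2)]
        _ ≤ ‖u - v‖ + 2 * α * L := by
            rw [norm_smul, norm_smul, Real.norm_eq_abs, abs_of_pos hα]
            have h1 := hgnorm (S (I ⟨t, by omega⟩)) u
            have h2 := hgnorm (S' (I ⟨t, by omega⟩)) v
            nlinarith
    · rw [if_neg h, add_zero, hSS' _ h]
      exact hnonexp _ _ _
  -- summed recursion
  have sumbound : ∀ t : ℕ, 1 ≤ t → t ≤ T →
      (∑ I : Fin (T + 1) → Fin n, ‖w I t - w' I t‖) ≤
        ((t : ℝ) - 1) * (2 * α * L) * (n : ℝ) ^ T := by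
    intro t ht
    induction t, ht using Nat.le_induction with
    | base =>
      intro _
      simp [hw1, hw1']
    | succ t ht ih =>
      intro hT'
      have htT : t ≤ T := by omega
      have hIH := ih htT
      have hstep : ∀ I : Fin (T + 1) → Fin n,
          ‖w I (t + 1) - w' I (t + 1)‖ ≤ ‖w I t - w' I t‖ +
            (if I ⟨t + 1, by omega⟩ = j then 2 * α * L else 0) := by
        intro I
        have := step I (t + 1) (by omega) hT'
        simpa using this
      calc (∑ I : Fin (T + 1) → Fin n, ‖w I (t + 1) - w' I (t + 1)‖)
          ≤ ∑ I : Fin (T + 1) → Fin n, (‖w I t - w' I t‖ +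
              (if I ⟨t + 1, by omega⟩ = j then 2 * α * L else 0)) :=
            Finset.sum_le_sum fun I _ => hstep I
        _ = (∑ I : Fin (T + 1) → Fin n, ‖w I t - w' I t‖) +
              ∑ I : Fin (T + 1) → Fin n, (if I ⟨t + 1, by omega⟩ = j then 2 * α * L else 0) :=
            Finset.sum_add_distrib
        _ ≤ ((t : ℝ) - 1) * (2 * α * L) * (n : ℝ) ^ T + (2 * α * L) * (n : ℝ) ^ T := by
            rw [count_sum n T ⟨t + 1, by omega⟩ j (2 * α * L)]
            linarith
        _ = (((t : ℕ) + 1 : ℝ) - 1) * (2 * α * L) * (n : ℝ) ^ T := by ring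
        _ = ((((t + 1 : ℕ)) : ℝ) - 1) * (2 * α * L) * (n : ℝ) ^ T := by push_cast; ring
  -- assemble
  have swap : (∑ I : Fin (T + 1) → Fin n,
        ((1 : ℝ) / k) * ∑ i : Fin k, ‖w I (T - k + 1 + i) - w' I (T - k + 1 + i)‖)
      = ((1 : ℝ) / k) * ∑ i : Fin k, ∑ I : Fin (T + 1) → Fin n,
          ‖w I (T - k + 1 + i) - w' I (T - k + 1 + i)‖ := by
    rw [← Finset.mul_sum]
    congr 1
    exact Finset.sum_comm
  rw [swap]
  have inner_bound : (∑ i : Fin k, ∑ I : Fin (T + 1) → Fin n,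
        ‖w I (T - k + 1 + i) - w' I (T - k + 1 + i)‖)
      ≤ ∑ i : Fin k, (((T - k + 1 + (i : ℕ) : ℕ) : ℝ) - 1) * (2 * α * L) * (n : ℝ) ^ T := by
    apply Finset.sum_le_sum
    intro i _
    exact sumbound (T - k + 1 + i) (by omega) (by omega)
  have hsum : (∑ i : Fin k, (((T - k + 1 + (i : ℕ) : ℕ) : ℝ) - 1) * (2 * α * L) * (n : ℝ) ^ T)
      = ((k : ℝ) * ((T : ℝ) - k) + (k : ℝ) * ((k : ℝ) - 1) / 2) * ((2 * α * L) * (n : ℝ) ^ T) := by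
    have hS : (∑ i : Fin k, (((T - k + 1 + (i : ℕ) : ℕ) : ℝ) - 1))
        = (k : ℝ) * ((T : ℝ) - k) + (k : ℝ) * ((k : ℝ) - 1) / 2 := by
      have hterm : ∀ i : Fin k, (((T - k + 1 + (i : ℕ) : ℕ) : ℝ) - 1) = ((T : ℝ) - k) + (i : ℕ) := by
        intro i
        push_cast [Nat.cast_sub hkT]
        ring
      rw [Finset.sum_congr rfl fun i _ => hterm i, Finset.sum_add_distrib, Finset.sum_const,
        Finset.card_univ, Fintype.card_fin, nsmul_eq_mul, Fin.sum_univ_eq_sum_range]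
      rw [sum_range_id_real]
    calc (∑ i : Fin k, (((T - k + 1 + (i : ℕ) : ℕ) : ℝ) - 1) * (2 * α * L) * (n : ℝ) ^ T)
        = (∑ i : Fin k, (((T - k + 1 + (i : ℕ) : ℕ) : ℝ) - 1)) * ((2 * α * L) * (n : ℝ) ^ T) := by
          rw [Finset.sum_mul]
          exact Finset.sum_congr rfl fun i _ => by ring
      _ = ((k : ℝ) * ((T : ℝ) - k) + (k : ℝ) * ((k : ℝ) - 1) / 2) * ((2 * α * L) * (n : ℝ) ^ T) := by
          rw [hS]
  have hmono : ((1 : ℝ) / (n : ℝ) ^ (T + 1)) * (((1 : ℝ) / k) *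
        (∑ i : Fin k, ∑ I : Fin (T + 1) → Fin n,
          ‖w I (T - k + 1 + i) - w' I (T - k + 1 + i)‖))
      ≤ ((1 : ℝ) / (n : ℝ) ^ (T + 1)) * (((1 : ℝ) / k) *
        (((k : ℝ) * ((T : ℝ) - k) + (k : ℝ) * ((k : ℝ) - 1) / 2) * ((2 * α * L) * (n : ℝ) ^ T))) := by
    apply mul_le_mul_of_nonneg_left _ (by positivity)
    apply mul_le_mul_of_nonneg_left _ (by positivity)
    rw [← hsum]
    exact inner_bound
  refine le_trans hmono ?_
  have heq : ((1 : ℝ) / (n : ℝ) ^ (T + 1)) * (((1 : ℝ) / k) *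
        (((k : ℝ) * ((T : ℝ) - k) + (k : ℝ) * ((k : ℝ) - 1) / 2) * ((2 * α * L) * (n : ℝ) ^ T)))
      = (2 * α * L / n) * ((T : ℝ) - (k : ℝ) / 2 - 1 / 2) := by
    rw [pow_succ]
    field_simp
    ring
  rw [heq]
  have hfac : (0 : ℝ) ≤ 2 * α * L / n := by positivity
  have : (T : ℝ) - (k : ℝ) / 2 - 1 / 2 ≤ (T : ℝ) - (k : ℝ) / 2 := by linarith
  exact mul_le_mul_of_nonneg_left this hfac
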